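/- For every unit vector γ ∈ ℝ³ (‖γ‖ = 1), one has γ̃(r(γ)) = γ; that is, the map γ̃ is a left inverse of r on the unit sphere. -/

import Mathlib

open Real

/-- The contact point vector `r(γ)` (in body coordinates) of the ellipsoid with
semi-axes `a, b, c`, as a function of the Poisson vector `γ`. -/
noncomputable def contactPoint (a b c : ℝ) (γ : EuclideanSpace ℝ (Fin 3)) :
    EuclideanSpace ℝ (Fin 3) :=
  WithLp.toLp 2 ![-(a ^ 2 * γ 0) / Real.sqrt (a ^ 2 * γ 0 ^ 2 + b ^ 2 * γ 1 ^ 2 + c ^ 2 * γ 2 ^ 2),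
    -(b ^ 2 * γ 1) / Real.sqrt (a ^ 2 * γ 0 ^ 2 + b ^ 2 * γ 1 ^ 2 + c ^ 2 * γ 2 ^ 2),
    -(c ^ 2 * γ 2) / Real.sqrt (a ^ 2 * γ 0 ^ 2 + b ^ 2 * γ 1 ^ 2 + c ^ 2 * γ 2 ^ 2)]

/-- The Poisson vector `γ̃(r)` as a function of the contact point `r`. -/
noncomputable def poissonVec (a b c : ℝ) (r : EuclideanSpace ℝ (Fin 3)) :
    EuclideanSpace ℝ (Fin 3) :=
  WithLp.toLp 2 ![-(b ^ 2 * c ^ 2 * r 0) /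
      Real.sqrt (b ^ 4 * c ^ 4 * r 0 ^ 2 + a ^ 4 * c ^ 4 * r 1 ^ 2 + a ^ 4 * b ^ 4 * r 2 ^ 2),
    -(a ^ 2 * c ^ 2 * r 1) /
      Real.sqrt (b ^ 4 * c ^ 4 * r 0 ^ 2 + a ^ 4 * c ^ 4 * r 1 ^ 2 + a ^ 4 * b ^ 4 * r 2 ^ 2),
    -(a ^ 2 * b ^ 2 * r 2) /
      Real.sqrt (b ^ 4 * c ^ 4 * r 0 ^ 2 + a ^ 4 * c ^ 4 * r 1 ^ 2 + a ^ 4 * b ^ 4 * r 2 ^ 2)]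

/- Up to a positive factor, `r(γ)` is `-diag(a², b², c²) γ`, and `γ̃(r)` is the unit vector along
`-diag(b²c², a²c², a²b²) r`; `γ̃` ignores positive factors, and the two diagonal matrices multiply to
`a²b²c² · 1`, so `γ̃(r(γ)) = γ / ‖γ‖`. -/

lemma EuclideanSpace.norm_fin_three (x : EuclideanSpace ℝ (Fin 3)) :
    ‖x‖ = √(x 0 ^ 2 + x 1 ^ 2 + x 2 ^ 2) := by
  rw [← Real.sqrt_sq (norm_nonneg x), EuclideanSpace.real_norm_sq_eq, Fin.sum_univ_three]

lemma poissonVec_smul (a b c : ℝ) {t : ℝ} (ht : 0 < t) (r : EuclideanSpace ℝ (Fin 3)) :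
    poissonVec a b c (t • r) = poissonVec a b c r := by
  have hD : √(b ^ 4 * c ^ 4 * (t * r 0) ^ 2 + a ^ 4 * c ^ 4 * (t * r 1) ^ 2 +
      a ^ 4 * b ^ 4 * (t * r 2) ^ 2) =
      t * √(b ^ 4 * c ^ 4 * r 0 ^ 2 + a ^ 4 * c ^ 4 * r 1 ^ 2 + a ^ 4 * b ^ 4 * r 2 ^ 2) := by
    conv_rhs => rw [← Real.sqrt_sq ht.le, ← Real.sqrt_mul (sq_nonneg t)]
    ring_nf
  have hcancel : ∀ u x X : ℝ, -(u * (t * x)) / (t * X) = -(u * x) / X := fun u x X => by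
    rw [mul_left_comm, ← mul_neg, mul_div_mul_left _ _ ht.ne']
  simp only [poissonVec, PiLp.smul_apply, smul_eq_mul, hD, hcancel]

lemma contactPoint_eq_smul (a b c : ℝ) (γ : EuclideanSpace ℝ (Fin 3)) :
    contactPoint a b c γ = (√(a ^ 2 * γ 0 ^ 2 + b ^ 2 * γ 1 ^ 2 + c ^ 2 * γ 2 ^ 2))⁻¹ •
      WithLp.toLp 2 ![-(a ^ 2 * γ 0), -(b ^ 2 * γ 1), -(c ^ 2 * γ 2)] := by
  ext i
  fin_cases i <;> simp [contactPoint, div_eq_inv_mul]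

lemma weighted_sum_sq_pos {a b c : ℝ} (ha : a ≠ 0) (hb : b ≠ 0) (hc : c ≠ 0)
    {γ : EuclideanSpace ℝ (Fin 3)} (hγ : γ ≠ 0) :
    0 < a ^ 2 * γ 0 ^ 2 + b ^ 2 * γ 1 ^ 2 + c ^ 2 * γ 2 ^ 2 := by
  contrapose! hγ
  have h0 := mul_nonneg (sq_nonneg a) (sq_nonneg (γ 0))
  have h1 := mul_nonneg (sq_nonneg b) (sq_nonneg (γ 1))
  have h2 := mul_nonneg (sq_nonneg c) (sq_nonneg (γ 2))
  have hγ0 : a ^ 2 * γ 0 ^ 2 = 0 := by linarith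
  have hγ1 : b ^ 2 * γ 1 ^ 2 = 0 := by linarith
  have hγ2 : c ^ 2 * γ 2 ^ 2 = 0 := by linarith
  ext i
  fin_cases i <;> simp_all

lemma poissonVec_neg_diag (a b c : ℝ) (ha : a ≠ 0) (hb : b ≠ 0) (hc : c ≠ 0)
    (γ : EuclideanSpace ℝ (Fin 3)) :
    poissonVec a b c (WithLp.toLp 2 ![-(a ^ 2 * γ 0), -(b ^ 2 * γ 1), -(c ^ 2 * γ 2)]) =
      ‖γ‖⁻¹ • γ := by
  have hD : √(b ^ 4 * c ^ 4 * (-(a ^ 2 * γ 0)) ^ 2 + a ^ 4 * c ^ 4 * (-(b ^ 2 * γ 1)) ^ 2 +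
      a ^ 4 * b ^ 4 * (-(c ^ 2 * γ 2)) ^ 2) = a ^ 2 * b ^ 2 * c ^ 2 * ‖γ‖ := by
    rw [EuclideanSpace.norm_fin_three, ← Real.sqrt_sq (by positivity : 0 ≤ a ^ 2 * b ^ 2 * c ^ 2),
      ← Real.sqrt_mul (by positivity)]
    ring_nf
  simp only [poissonVec, Matrix.cons_val_zero, Matrix.cons_val_one,
    Matrix.cons_val_two, Matrix.head_cons, Matrix.tail_cons, hD]
  ext i
  fin_cases i <;>
  · simp only [Fin.isValue, mul_neg, neg_neg, Fin.zero_eta, Fin.mk_one, Fin.reduceFinMk,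
      Matrix.cons_val_zero, Matrix.cons_val_one, Matrix.cons_val, PiLp.smul_apply, smul_eq_mul]
    rw [← div_eq_inv_mul, ← mul_div_mul_left _ ‖γ‖ (by positivity : a ^ 2 * b ^ 2 * c ^ 2 ≠ 0)]
    ring

lemma poissonVec_contactPoint_eq_normalize {a b c : ℝ} (ha : a ≠ 0) (hb : b ≠ 0) (hc : c ≠ 0)
    {γ : EuclideanSpace ℝ (Fin 3)} (hγ : γ ≠ 0) :
    poissonVec a b c (contactPoint a b c γ) = ‖γ‖⁻¹ • γ := by
  have hΔ := Real.sqrt_pos.mpr (weighted_sum_sq_pos ha hb hc hγ)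
  rw [contactPoint_eq_smul, poissonVec_smul a b c (inv_pos.mpr hΔ),
    poissonVec_neg_diag a b c ha hb hc]

/-- For every unit vector `γ`, `γ̃(r(γ)) = γ`: the map `γ̃` is a left inverse of `r`
on the unit sphere. -/
theorem poissonVec_contactPoint (a b c : ℝ) (ha : 0 < a) (hb : 0 < b) (hc : 0 < c)
    (γ : EuclideanSpace ℝ (Fin 3)) (hγ : ‖γ‖ = 1) :
    poissonVec a b c (contactPoint a b c γ) = γ := by
  have hγ0 : γ ≠ 0 := norm_ne_zero_iff.mp (hγ ▸ one_ne_zero)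
  rw [poissonVec_contactPoint_eq_normalize ha.ne' hb.ne' hc.ne' hγ0, hγ, inv_one, one_smul]
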